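/- Let N ≥ 1 be an integer and γ > 0, ρ > 0, β > 0, σ > 0, Δ > 0 reals. Let λ₀ > 0 and let R, A : (0, λ₀) → ℝ be functions such that the limits lim_{λ→0⁺} (R(λ) − √(γ/λ)·Δ) and lim_{λ→0⁺} (A(λ) − 1)/√λ both exist and are finite, and such that R(λ) > 0 for all λ ∈ (0, λ₀). Define J(λ) = (1 + 2λN·R(λ)²·A(λ)/γ)·(R(λ)A(λ)/γ)·σ²/(ρ(2β+ρ)(β+ρ+R(λ))) − (1/(ρ(2β+ρ)))·(σR(λ)A(λ)/γ)²·(λN + (γ + 2λN·R(λ)²)/((ρ + 2R(λ))(β+ρ+R(λ)))). Then lim_{λ→0⁺} (J(λ) − σ²/(2ργ(2β+ρ)))/√λ = −σ²(1 + 2Δ²N)/(4γ^{3/2}ρΔ). -/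

import Mathlib

/-!
With `u = √λ` and `S = √λ·R(λ)` the value is `J = σ²/(ρ(2β+ρ)γ) · F(u, S, A)`, where
`F = scaledValue N γ ρ β` is rational and regular near `(0, √γ·Δ, 1)`. Without friction,
`F(0, S, A) = A − A²/2` for every `S`: it is stationary in `S` and maximal at `A = 1`, with value
`1/2`. Hence `F(u, S, A) − 1/2 = u·G(u, S, A) − (A − 1)²/2` with `G = scaledValueSlope N γ ρ β`
continuous at `(0, √γ·Δ, 1)`, and since `A − 1 = O(√λ)` the quadratic term is `o(√λ)`. So the
slope of `J` is `σ²/(ρ(2β+ρ)γ) · G(0, √γ·Δ, 1)`, whatever the `O(1)` and `O(√λ)` corrections in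
`R` and `A` are.
-/

open Filter Topology

noncomputable def scaledValue (N γ ρ β u S A : ℝ) : ℝ :=
  (1 + 2 * N * S ^ 2 * A / γ) * S * A / (u * (β + ρ) + S)
    - A ^ 2 / γ * (N * S ^ 2
      + S ^ 2 * (γ + 2 * N * S ^ 2) / ((u * (β + ρ) + S) * (u * ρ + 2 * S)))

noncomputable def scaledValueSlope (N γ ρ β u S A : ℝ) : ℝ :=
  -(1 + 2 * N * S ^ 2 * A / γ) * A * (β + ρ) / (u * (β + ρ) + S)
    + A ^ 2 * (γ + 2 * N * S ^ 2) * (u * ρ * (β + ρ) + S * (2 * β + 3 * ρ))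
      / (2 * γ * (u * (β + ρ) + S) * (u * ρ + 2 * S))

section ScaledValue

variable (N γ ρ β : ℝ)

theorem scaledValue_zero {S : ℝ} (A : ℝ) (hγ : γ ≠ 0) (hS : S ≠ 0) :
    scaledValue N γ ρ β 0 S A = A - A ^ 2 / 2 := by
  unfold scaledValue
  simp only [zero_mul, zero_add]
  field_simp
  ring

theorem scaledValue_sub_scaledValue_zero {u S : ℝ} (A : ℝ) (hS : S ≠ 0)
    (h₁ : u * (β + ρ) + S ≠ 0) (h₂ : u * ρ + 2 * S ≠ 0) :
    scaledValue N γ ρ β u S A - scaledValue N γ ρ β 0 S A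
      = u * scaledValueSlope N γ ρ β u S A := by
  unfold scaledValue scaledValueSlope
  simp only [zero_mul, zero_add]
  field_simp
  ring

theorem scaledValueSlope_zero_one {c : ℝ} (hγ : γ ≠ 0) (hc : c ≠ 0) :
    scaledValueSlope N γ ρ β 0 c 1 = -((2 * β + ρ) * (γ + 2 * N * c ^ 2) / (4 * γ * c)) := by
  unfold scaledValueSlope
  simp only [zero_mul, zero_add, mul_one, one_pow]
  field_simp
  ring

theorem continuousAt_scaledValueSlope {c : ℝ} (hγ : γ ≠ 0) (hc : c ≠ 0) :
    ContinuousAt (fun p : ℝ × ℝ × ℝ => scaledValueSlope N γ ρ β p.1 p.2.1 p.2.2) (0, c, 1) := by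
  unfold scaledValueSlope
  fun_prop (disch := simp [hγ, hc])

theorem tendsto_scaledValue_sub_half_div {α : Type*} {l : Filter α} {u S A : α → ℝ} {c a : ℝ}
    (hγ : γ ≠ 0) (hc : c ≠ 0) (hu : Tendsto u l (𝓝 0)) (hu₀ : ∀ᶠ x in l, u x ≠ 0)
    (hS : Tendsto S l (𝓝 c)) (hA : Tendsto (fun x => (A x - 1) / u x) l (𝓝 a)) :
    Tendsto (fun x => (scaledValue N γ ρ β (u x) (S x) (A x) - 1 / 2) / u x) l
      (𝓝 (scaledValueSlope N γ ρ β 0 c 1)) := by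
  have hA₁ : Tendsto A l (𝓝 1) := by
    have h := (hu.mul hA).const_add 1
    rw [zero_mul, add_zero] at h
    refine h.congr' ?_
    filter_upwards [hu₀] with x hx
    field_simp
    ring
  have hD₁ : ∀ᶠ x in l, u x * (β + ρ) + S x ≠ 0 := by
    have h := (hu.mul_const (β + ρ)).add hS
    rw [zero_mul, zero_add] at h
    exact h.eventually_ne hc
  have hD₂ : ∀ᶠ x in l, u x * ρ + 2 * S x ≠ 0 := by
    have h := (hu.mul_const ρ).add (hS.const_mul 2)
    rw [zero_mul, zero_add] at h
    exact h.eventually_ne (mul_ne_zero two_ne_zero hc)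
  have hslope : Tendsto (fun x => scaledValueSlope N γ ρ β (u x) (S x) (A x)) l
      (𝓝 (scaledValueSlope N γ ρ β 0 c 1)) := by
    -- elaborated apart from the goal, against which unifying the `∘` unfolds `scaledValueSlope`
    have h := (continuousAt_scaledValueSlope N γ ρ β hγ hc).tendsto.comp
      (hu.prodMk_nhds (hS.prodMk_nhds hA₁))
    exact h
  have hquad : Tendsto (fun x => u x * ((A x - 1) / u x) ^ 2 / 2) l (𝓝 0) := by
    simpa using (hu.mul (hA.pow 2)).div_const 2
  have hlim := hslope.sub hquad
  rw [sub_zero] at hlim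
  refine hlim.congr' ?_
  filter_upwards [hu₀, hS.eventually_ne hc, hD₁, hD₂] with x hu hS hD₁ hD₂
  have hsub := scaledValue_sub_scaledValue_zero N γ ρ β (A x) hS hD₁ hD₂
  rw [scaledValue_zero N γ ρ β (A x) hγ hS] at hsub
  have hq : A x - 1 = u x * ((A x - 1) / u x) := by field_simp
  generalize (A x - 1) / u x = q at hq ⊢
  rw [eq_div_iff hu]
  linear_combination -hsub + (A x - 1 + u x * q) / 2 * hq

end ScaledValue

theorem equilibriumValue_eq_mul_scaledValue {N γ ρ β σ lam u R A : ℝ} (hγ : γ ≠ 0)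
    (hu : u ≠ 0) (hlam : lam = u ^ 2) (hD₁ : β + ρ + R ≠ 0) (hD₂ : ρ + 2 * R ≠ 0) :
    (1 + 2 * lam * N * R ^ 2 * A / γ) * (R * A / γ) * σ ^ 2 / (ρ * (2 * β + ρ) * (β + ρ + R))
        - (1 / (ρ * (2 * β + ρ))) * (σ * R * A / γ) ^ 2
          * (lam * N + (γ + 2 * lam * N * R ^ 2) / ((ρ + 2 * R) * (β + ρ + R)))
      = σ ^ 2 / (ρ * (2 * β + ρ) * γ) * scaledValue N γ ρ β u (u * R) A := by
  subst hlam
  have hD₁' : u * (β + ρ) + u * R ≠ 0 := by rw [← mul_add]; exact mul_ne_zero hu hD₁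
  have hD₂' : u * ρ + 2 * (u * R) ≠ 0 := by
    rw [mul_left_comm, ← mul_add]; exact mul_ne_zero hu hD₂
  unfold scaledValue
  field_simp

theorem tendsto_sqrt_nhdsGT_zero : Tendsto Real.sqrt (𝓝[>] 0) (𝓝 0) :=
  (Real.continuous_sqrt.tendsto' 0 0 Real.sqrt_zero).mono_left nhdsWithin_le_nhds

theorem tendsto_sqrt_mul_of_tendsto_sub_sqrt_div_mul {R : ℝ → ℝ} {γ Δ L : ℝ}
    (h : Tendsto (fun lam => R lam - √(γ / lam) * Δ) (𝓝[>] 0) (𝓝 L)) :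
    Tendsto (fun lam => √lam * R lam) (𝓝[>] 0) (𝓝 (√γ * Δ)) := by
  have hlim := (tendsto_sqrt_nhdsGT_zero.mul h).const_add (√γ * Δ)
  rw [zero_mul, add_zero] at hlim
  refine hlim.congr' ?_
  filter_upwards [self_mem_nhdsWithin] with lam (hlam : 0 < lam)
  rw [Real.sqrt_div' γ hlam.le]
  field_simp
  ring

theorem value_asymptotics_from_coefficient_asymptotics
    (N : ℕ) (γ ρ β σ Δ : ℝ)
    (hγ : 0 < γ) (hρ : 0 < ρ) (hβ : 0 < β) (hΔ : 0 < Δ)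
    (lam0 : ℝ) (hlam0 : 0 < lam0) (R A : ℝ → ℝ)
    (hR : ∃ LR : ℝ, Tendsto (fun lam : ℝ => R lam - Real.sqrt (γ / lam) * Δ)
      (nhdsWithin (0 : ℝ) (Set.Ioi 0)) (nhds LR))
    (hA : ∃ LA : ℝ, Tendsto (fun lam : ℝ => (A lam - 1) / Real.sqrt lam)
      (nhdsWithin (0 : ℝ) (Set.Ioi 0)) (nhds LA))
    (hRpos : ∀ lam : ℝ, lam ∈ Set.Ioo (0 : ℝ) lam0 → 0 < R lam)
    (J : ℝ → ℝ)
    (hJ : ∀ lam : ℝ, J lam =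
      (1 + 2 * lam * (N : ℝ) * (R lam) ^ 2 * A lam / γ) * (R lam * A lam / γ)
          * σ ^ 2 / (ρ * (2 * β + ρ) * (β + ρ + R lam))
        - (1 / (ρ * (2 * β + ρ))) * (σ * R lam * A lam / γ) ^ 2
          * (lam * (N : ℝ)
              + (γ + 2 * lam * (N : ℝ) * (R lam) ^ 2)
                / ((ρ + 2 * R lam) * (β + ρ + R lam)))) :
    Tendsto (fun lam : ℝ =>
        (J lam - σ ^ 2 / (2 * ρ * γ * (2 * β + ρ))) / Real.sqrt lam)
      (nhdsWithin (0 : ℝ) (Set.Ioi 0))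
      (nhds (-(σ ^ 2 * (1 + 2 * Δ ^ 2 * (N : ℝ))
        / (4 * γ ^ ((3 : ℝ) / 2) * ρ * Δ)))) := by
  obtain ⟨LR, hLR⟩ := hR
  obtain ⟨LA, hLA⟩ := hA
  have hc : √γ * Δ ≠ 0 := by positivity
  have hsqrt₀ : ∀ᶠ lam in 𝓝[>] (0 : ℝ), √lam ≠ 0 := by
    filter_upwards [self_mem_nhdsWithin] with lam (hlam : 0 < lam)
    positivity
  have hlim := (tendsto_scaledValue_sub_half_div N γ ρ β hγ.ne' hc tendsto_sqrt_nhdsGT_zero hsqrt₀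
    (tendsto_sqrt_mul_of_tendsto_sub_sqrt_div_mul hLR) hLA).const_mul (σ ^ 2 / (ρ * (2 * β + ρ) * γ))
  have hval : -(σ ^ 2 * (1 + 2 * Δ ^ 2 * (N : ℝ)) / (4 * γ ^ ((3 : ℝ) / 2) * ρ * Δ))
      = σ ^ 2 / (ρ * (2 * β + ρ) * γ) * scaledValueSlope N γ ρ β 0 (√γ * Δ) 1 := by
    rw [scaledValueSlope_zero_one _ _ _ _ hγ.ne' hc, Real.rpow_div_two_eq_sqrt _ hγ.le,
      Real.rpow_ofNat]
    field_simp
    rw [Real.sq_sqrt hγ.le]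
    ring
  rw [hval]
  refine hlim.congr' ?_
  filter_upwards [Ioo_mem_nhdsGT hlam0] with lam hlam
  have hRlam := hRpos lam hlam
  have hu : √lam ≠ 0 := (Real.sqrt_pos.mpr hlam.1).ne'
  rw [hJ, equilibriumValue_eq_mul_scaledValue hγ.ne' hu
    (Real.sq_sqrt hlam.1.le).symm (by positivity) (by positivity)]
  field_simp
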